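/- arXiv:2504.00175 — 4 statements merged into one kernel-verified Lean document; each statement's English description precedes it below -/
import Mathlib

section
/- Let n ∈ ℕ and s_1, ..., s_n > 0 be positive reals such that every quotient s_k / s_ℓ is rational. Write s_k / s_n = p_k / q_k with p_k, q_k positive integers, let p = lcm(p_1,...,p_n) and q = lcm(p q_1/p_1, ..., p q_n/p_n). Then every complex z satisfying e^{2πi z s_k} = 1 for all k belongs to the set (1/s_n)·(q/p)·ℤ. -/
open Complex

theorem stmt_1 (n : ℕ) (s : Fin (n + 1) → ℝ) (hs : ∀ k, 0 < s k)
    (hrat : ∀ k ℓ : Fin (n + 1), ∃ r : ℚ, s k / s ℓ = (r : ℝ))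
    (p q : Fin (n + 1) → ℕ) (hp : ∀ k, 0 < p k) (hq : ∀ k, 0 < q k)
    (hpq : ∀ k, s k / s (Fin.last n) = (p k : ℝ) / (q k : ℝ))
    (P Q : ℕ) (hP : P = Finset.univ.lcm p)
    (hQ : Q = Finset.univ.lcm (fun k => P * q k / p k))
    (z : ℂ) (hz : ∀ k, Complex.exp (2 * Real.pi * Complex.I * z * (s k)) = 1) :
    ∃ m : ℤ, z = (1 / (s (Fin.last n) : ℂ)) * ((Q : ℂ) / (P : ℂ)) * (m : ℂ) := by
  have hsn := hs (Fin.last n)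
  have h2pi : (2 * (Real.pi : ℂ) * Complex.I) ≠ 0 := by
    simp [Real.pi_ne_zero, Complex.I_ne_zero]
  have key : ∀ k, ∃ m : ℤ, z * (s k : ℂ) = (m : ℂ) := by
    intro k
    obtain ⟨m, hm⟩ := Complex.exp_eq_one_iff.1 (hz k)
    refine ⟨m, mul_left_cancel₀ h2pi ?_⟩
    rw [show (2 * (Real.pi : ℂ) * Complex.I) * (z * (s k : ℂ)) =
      2 * Real.pi * Complex.I * z * (s k) by ring, hm]; ring
  choose m hm using key
  set l := Fin.last n with hl
  -- integer relation
  have hint : ∀ k, (m k) * (q k) = (m l) * (p k) := by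
    intro k
    have hc : ((m k : ℝ) : ℂ) * (s l : ℂ) = ((m l : ℝ) : ℂ) * (s k : ℂ) := by
      push_cast
      rw [← hm k, ← hm l]; ring
    have hr : (m k : ℝ) * s l = (m l : ℝ) * s k := by
      exact_mod_cast hc
    have hqk : (q k : ℝ) ≠ 0 := Nat.cast_ne_zero.2 (hq k).ne'
    have h4 : s k * (q k : ℝ) = (p k : ℝ) * s l := by
      have := hpq k
      field_simp at this
      linarith [this]
    have h5 : ((m k : ℝ) * (q k : ℝ)) * s l = ((m l : ℝ) * (p k : ℝ)) * s l := by
      linear_combination (q k : ℝ) * hr + (m l : ℝ) * h4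
    have h6 : (m k : ℝ) * (q k : ℝ) = (m l : ℝ) * (p k : ℝ) :=
      mul_right_cancel₀ hsn.ne' h5
    exact_mod_cast h6
  have hP0 : P ≠ 0 := by
    rw [hP]
    intro h
    rw [Finset.lcm_eq_zero_iff] at h
    obtain ⟨k, -, hk⟩ := Set.mem_image _ _ _ |>.1 h
    exact (hp k).ne' hk
  -- divisibility
  have hdvd : ∀ k, ((P * q k / p k : ℕ) : ℤ) ∣ (P : ℤ) * m l := by
    intro k
    obtain ⟨t, ht⟩ := (hP ▸ Finset.dvd_lcm (Finset.mem_univ k) : p k ∣ P)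
    have hdiv : P * q k / p k = t * q k := by
      rw [ht, mul_assoc, Nat.mul_div_cancel_left _ (hp k)]
    refine ⟨m k, ?_⟩
    rw [hdiv]
    push_cast [ht]
    have := hint k
    have : ((m k : ℤ)) * (q k : ℤ) = (m l) * (p k : ℤ) := by exact_mod_cast this
    linear_combination -(t : ℤ) * this
  have hQdvd : (Q : ℤ) ∣ (P : ℤ) * m l := by
    have h1 : Q ∣ ((P : ℤ) * m l).natAbs := by
      rw [hQ]
      apply Finset.lcm_dvd
      intro k _
      have := hdvd k
      rwa [← Int.natAbs_dvd_natAbs, Int.natAbs_natCast] at this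
    calc (Q : ℤ) ∣ (((P : ℤ) * m l).natAbs : ℤ) := Int.natCast_dvd_natCast.2 h1
      _ ∣ (P : ℤ) * m l := Int.natAbs_dvd.2 dvd_rfl
  obtain ⟨w, hw⟩ := hQdvd
  refine ⟨w, ?_⟩
  have hsnC : ((s l : ℝ) : ℂ) ≠ 0 := by
    exact_mod_cast hsn.ne'
  have hPC : (P : ℂ) ≠ 0 := Nat.cast_ne_zero.2 hP0
  have hwC : (P : ℂ) * (m l : ℂ) = (Q : ℂ) * (w : ℂ) := by exact_mod_cast hw
  have hzl := hm l
  field_simp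
  linear_combination (P : ℂ) * hzl + hwC
end

section
/- Let W(ξ) = diag(e^{2πi ξ t_1}, ..., e^{2πi ξ t_{n_e}}) for positive echo times t_k, and suppose Φ ∈ ℂ^{n_e × n_s} is such that every n_s × n_s submatrix is non-singular, with n_e ≥ n_s. Let c_0 ≠ 0 and suppose W(η) Φ c_0 = Φ c_0 for some η ∈ ℂ. If there exist k ≠ ℓ in the support of Φ c_0 such that t_k/t_ℓ is irrational, then η = 0. -/
open Complex

def AllSubmatricesNonsingular {ne ns : ℕ} (Φ : Matrix (Fin ne) (Fin ns) ℂ) : Prop :=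
  ∀ f : Fin ns → Fin ne, Function.Injective f → (Φ.submatrix f id).det ≠ 0

theorem stmt_6 (ne ns : ℕ) (hn : ns ≤ ne)
    (t : Fin ne → ℝ) (ht : ∀ k, 0 < t k)
    (Φ : Matrix (Fin ne) (Fin ns) ℂ) (hΦ : AllSubmatricesNonsingular Φ)
    (c0 : Fin ns → ℂ) (hc0 : c0 ≠ 0) (η : ℂ)
    (hfix : (Matrix.diagonal fun k => Complex.exp (2 * Real.pi * Complex.I * η * (t k))).mulVec
      (Φ.mulVec c0) = Φ.mulVec c0)
    (k ℓ : Fin ne) (hkℓ : k ≠ ℓ)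
    (hk : Φ.mulVec c0 k ≠ 0) (hℓ : Φ.mulVec c0 ℓ ≠ 0)
    (hirr : Irrational (t k / t ℓ)) :
    η = 0 := by
  by_contra hη
  have key : ∀ j : Fin ne, Φ.mulVec c0 j ≠ 0 → ∃ m : ℤ, η * t j = m := by
    intro j hj
    have h1 : Complex.exp (2 * Real.pi * Complex.I * η * (t j)) * Φ.mulVec c0 j
        = Φ.mulVec c0 j := by
      have := congrFun hfix j
      simpa [Matrix.mulVec_diagonal] using this
    have hexp : Complex.exp (2 * Real.pi * Complex.I * η * (t j)) = 1 :=
      mul_right_cancel₀ hj (h1.trans (one_mul _).symm)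
    rw [Complex.exp_eq_one_iff] at hexp
    obtain ⟨m, hm⟩ := hexp
    refine ⟨m, ?_⟩
    have h2 : (2 : ℂ) * Real.pi * Complex.I ≠ 0 := by
      simp [Real.pi_ne_zero, Complex.I_ne_zero, Complex.ofReal_ne_zero]
    have : 2 * Real.pi * Complex.I * (η * t j) = 2 * Real.pi * Complex.I * m := by
      linear_combination hm
    exact mul_left_cancel₀ h2 this
  obtain ⟨m, hm⟩ := key k hk
  obtain ⟨n, hn'⟩ := key ℓ hℓ
  have htk : (t k : ℂ) ≠ 0 := by
    simp [Complex.ofReal_ne_zero]; exact (ht k).ne'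
  have htl : (t ℓ : ℂ) ≠ 0 := by
    simp [Complex.ofReal_ne_zero]; exact (ht ℓ).ne'
  have hn0 : (n : ℂ) ≠ 0 := by
    rw [← hn']; exact mul_ne_zero hη htl
  have hrat : ((t k) / (t ℓ) : ℂ) = (m : ℂ) / (n : ℂ) := by
    rw [div_eq_div_iff htl hn0]
    linear_combination (t ℓ : ℂ) * hm - (t k : ℂ) * hn'
  have hnZ : (n : ℤ) ≠ 0 := by exact_mod_cast fun h => hn0 (by exact_mod_cast h)
  apply hirr
  refine ⟨(m : ℚ) / (n : ℚ), ?_⟩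
  have h4 : (((m : ℚ) / n : ℚ) : ℂ) = ((t k / t ℓ : ℝ) : ℂ) := by
    push_cast
    exact hrat.symm
  exact_mod_cast h4
end

section
/- Let R(ξ) = W(ξ) P_R W(−ξ) with W(ξ) = diag(e^{2πi ξ t_k}), 0 < t_1 < ... < t_{n_e}, and P_R an orthogonal projector. Let τ_S = 4π(t_{n_e} − t_1) and τ = 4π t_{n_e}. Then the operator norm satisfies ‖R^{(n)}(ξ)‖ ≤ τ^n e^{τ_S |Im(ξ)|/2} for all n ≥ 0 and ξ ∈ ℂ. -/
/-!
Entrywise `R^{(n)}(ξ)_{ij} = (2πi(t_i - t_j))^n e^{2πiξ(t_i - t_j)} P_{ij}`, that is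
`R^{(n)}(ξ) = W(ξ) (ad_{2πiT})^n(P) W(-ξ)`. In the C*-algebra of matrices with the operator norm,
`‖ad_A X‖ ≤ 2‖A‖‖X‖`, `‖2πiT‖ ≤ 2π t_{n_e}` and `‖P‖ ≤ 1`, so the middle factor has norm at most
`τ^n`. Conjugation by `W` does not change when every `t_k` is shifted by the midpoint
`(t_1 + t_{n_e})/2`; after this shift each diagonal factor has norm at most `e^{τ_S |Im ξ|/4}`.
-/

open Complex Matrix

noncomputable def Wmat {ne : ℕ} (t : Fin ne → ℝ) (ξ : ℂ) : Matrix (Fin ne) (Fin ne) ℂ :=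
  Matrix.diagonal fun k => Complex.exp (2 * Real.pi * Complex.I * ξ * (t k))

noncomputable def PRabs {ne : ℕ} (P : Matrix (Fin ne) (Fin ne) ℂ) : Prop :=
  P * P = P ∧ Pᴴ = P

noncomputable def Rres' {ne : ℕ} (t : Fin ne → ℝ) (P : Matrix (Fin ne) (Fin ne) ℂ)
    (ξ : ℂ) : Matrix (Fin ne) (Fin ne) ℂ :=
  Wmat t ξ * P * Wmat t (-ξ)

open scoped Matrix.Norms.L2Operator

section Commutator

variable {A : Type*} [SeminormedRing A]

lemma norm_lie_le (a x : A) : ‖⁅a, x⁆‖ ≤ 2 * ‖a‖ * ‖x‖ :=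
  calc ‖a * x - x * a‖ ≤ ‖a * x‖ + ‖x * a‖ := norm_sub_le _ _
    _ ≤ ‖a‖ * ‖x‖ + ‖x‖ * ‖a‖ := add_le_add (norm_mul_le _ _) (norm_mul_le _ _)
    _ = 2 * ‖a‖ * ‖x‖ := by ring

lemma norm_iterate_lie_le (a x : A) (n : ℕ) :
    ‖(fun y => ⁅a, y⁆)^[n] x‖ ≤ (2 * ‖a‖) ^ n * ‖x‖ := by
  induction n with
  | zero => simp
  | succ n ih =>
    rw [Function.iterate_succ_apply']
    calc _ ≤ 2 * ‖a‖ * ‖(fun y => ⁅a, y⁆)^[n] x‖ := norm_lie_le _ _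
      _ ≤ 2 * ‖a‖ * ((2 * ‖a‖) ^ n * ‖x‖) := by gcongr
      _ = (2 * ‖a‖) ^ (n + 1) * ‖x‖ := by ring

end Commutator

lemma iterate_lie_diagonal_apply {ι R : Type*} [Fintype ι] [DecidableEq ι] [CommRing R]
    (d : ι → R) (M : Matrix ι ι R) (n : ℕ) (i j : ι) :
    ((fun X => ⁅diagonal d, X⁆)^[n] M) i j = (d i - d j) ^ n * M i j := by
  induction n with
  | zero => simp
  | succ n ih =>
    rw [Function.iterate_succ_apply', Ring.lie_def, Matrix.sub_apply, diagonal_mul, mul_diagonal,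
      ih]
    ring

lemma eq_pow_mul_exp_of_hasDerivAt {f : ℕ → ℂ → ℂ} {a c : ℂ}
    (h0 : ∀ z, f 0 z = c * exp (a * z)) (hf : ∀ n z, HasDerivAt (f n) (f (n + 1) z) z)
    (n : ℕ) (z : ℂ) : f n z = a ^ n * c * exp (a * z) := by
  induction n generalizing z with
  | zero => simp [h0]
  | succ n ih =>
    have hfn : f n = fun z => a ^ n * c * exp (a * z) := funext ih
    have hderiv : HasDerivAt (f n) (a ^ n * c * (exp (a * z) * a)) z := by
      rw [hfn]
      exact (((hasDerivAt_id z).const_mul a).cexp.const_mul _).congr_deriv (by simp)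
    rw [(hf n z).unique hderiv]
    ring

section Resolvent

variable {m : ℕ}

lemma PRabs.isStarProjection {P : Matrix (Fin m) (Fin m) ℂ} (hP : PRabs P) :
    IsStarProjection P :=
  ⟨hP.1, hP.2⟩

lemma Rres'_apply (t : Fin m → ℝ) (M : Matrix (Fin m) (Fin m) ℂ) (ξ : ℂ) (i j : Fin m) :
    Rres' t M ξ i j = M i j * exp (2 * Real.pi * I * (t i - t j) * ξ) := by
  simp only [Rres', Wmat, mul_diagonal, diagonal_mul]
  rw [mul_right_comm, mul_comm, ← exp_add]
  ring_nf

lemma Rres'_sub_const (t : Fin m → ℝ) (c : ℝ) (M : Matrix (Fin m) (Fin m) ℂ) (ξ : ℂ) :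
    Rres' (fun k => t k - c) M ξ = Rres' t M ξ := by
  ext i j
  simp only [Rres'_apply]
  push_cast
  ring_nf

lemma norm_Wmat_le (s : Fin m → ℝ) {r : ℝ} (hs : ∀ k, |s k| ≤ r) (ξ : ℂ) :
    ‖Wmat s ξ‖ ≤ Real.exp (2 * Real.pi * r * |ξ.im|) := by
  rw [Wmat, l2_opNorm_diagonal]
  refine (pi_norm_le_iff_of_nonneg (Real.exp_nonneg _)).mpr fun k => ?_
  have hre : (2 * Real.pi * I * ξ * s k).re = -(2 * Real.pi * ξ.im * s k) := by
    simp [mul_re, mul_im]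
  rw [norm_exp, Real.exp_le_exp, hre]
  calc -(2 * Real.pi * ξ.im * s k) ≤ |2 * Real.pi * ξ.im * s k| := neg_le_abs _
    _ = 2 * Real.pi * |ξ.im| * |s k| := by
        rw [abs_mul, abs_mul, abs_of_pos Real.two_pi_pos]
    _ ≤ 2 * Real.pi * r * |ξ.im| := by
        rw [mul_right_comm]; gcongr; exact hs k

lemma norm_Rres'_le (t : Fin m → ℝ) {c r : ℝ} (ht : ∀ k, |t k - c| ≤ r)
    (M : Matrix (Fin m) (Fin m) ℂ) (ξ : ℂ) :
    ‖Rres' t M ξ‖ ≤ ‖M‖ * Real.exp (4 * Real.pi * r * |ξ.im|) := by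
  rw [← Rres'_sub_const t c, Rres']
  have hW := norm_Wmat_le _ ht
  calc ‖Wmat (fun k => t k - c) ξ * M * Wmat (fun k => t k - c) (-ξ)‖
      ≤ ‖Wmat (fun k => t k - c) ξ‖ * ‖M‖ * ‖Wmat (fun k => t k - c) (-ξ)‖ := norm_mul₃_le
    _ ≤ Real.exp (2 * Real.pi * r * |ξ.im|) * ‖M‖ * Real.exp (2 * Real.pi * r * |ξ.im|) := by
        grw [hW ξ, hW (-ξ), neg_im, abs_neg]
    _ = ‖M‖ * Real.exp (4 * Real.pi * r * |ξ.im|) := by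
        rw [mul_right_comm, ← Real.exp_add]; ring_nf

lemma eq_Rres'_iterate_lie_of_hasDerivAt (t : Fin m → ℝ) (P : Matrix (Fin m) (Fin m) ℂ)
    (Rn : ℕ → ℂ → Matrix (Fin m) (Fin m) ℂ) (hRn0 : Rn 0 = Rres' t P)
    (hRnD : ∀ n ξ i j, HasDerivAt (fun z => Rn n z i j) (Rn (n + 1) ξ i j) ξ) (n : ℕ) (ξ : ℂ) :
    Rn n ξ = Rres' t ((fun X => ⁅diagonal fun k => 2 * Real.pi * I * t k, X⁆)^[n] P) ξ := by
  ext i j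
  rw [Rres'_apply, iterate_lie_diagonal_apply, ← mul_sub]
  refine eq_pow_mul_exp_of_hasDerivAt (f := fun n z => Rn n z i j) (fun z => ?_)
    (fun n z => hRnD n z i j) n ξ
  rw [hRn0, Rres'_apply]

lemma norm_iterate_lie_diagonal_le (t : Fin m → ℝ) {r : ℝ} (hr : 0 ≤ r)
    (ht : ∀ k, |t k| ≤ r) (M : Matrix (Fin m) (Fin m) ℂ) (n : ℕ) :
    ‖(fun X => ⁅diagonal fun k => 2 * Real.pi * I * t k, X⁆)^[n] M‖ ≤
      (4 * Real.pi * r) ^ n * ‖M‖ := by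
  have hdiag : 2 * ‖(diagonal fun k => 2 * Real.pi * I * t k : Matrix (Fin m) (Fin m) ℂ)‖ ≤
      4 * Real.pi * r := by
    rw [l2_opNorm_diagonal, show 4 * Real.pi * r = 2 * (2 * Real.pi * r) by ring]
    gcongr
    refine pi_norm_le_iff_of_nonneg (by positivity) |>.mpr fun k => ?_
    simpa [abs_of_pos Real.pi_pos] using mul_le_mul_of_nonneg_left (ht k) Real.two_pi_pos.le
  exact (norm_iterate_lie_le _ M n).trans (by gcongr)

end Resolvent

theorem stmt_13 (ne : ℕ) (t : Fin (ne + 1) → ℝ) (ht0 : 0 < t 0) (htm : StrictMono t)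
    (P : Matrix (Fin (ne + 1)) (Fin (ne + 1)) ℂ) (hP : PRabs P)
    (τS τ : ℝ) (hτS : τS = 4 * Real.pi * (t (Fin.last ne) - t 0))
    (hτ : τ = 4 * Real.pi * t (Fin.last ne))
    (Rn : ℕ → ℂ → Matrix (Fin (ne + 1)) (Fin (ne + 1)) ℂ)
    (hRn0 : Rn 0 = Rres' t P)
    (hRnD : ∀ n ξ i j, HasDerivAt (fun z => Rn n z i j) (Rn (n + 1) ξ i j) ξ) :
    ∀ (n : ℕ) (ξ : ℂ),
      ‖Matrix.toEuclideanCLM (𝕜 := ℂ) (Rn n ξ)‖ ≤ τ ^ n * Real.exp (τS * |ξ.im| / 2) := by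
  intro n ξ
  have ht_first : ∀ k, t 0 ≤ t k := fun k => htm.monotone (Fin.zero_le k)
  have ht_last : ∀ k, t k ≤ t (Fin.last ne) := fun k => htm.monotone (Fin.le_last k)
  have ht_abs : ∀ k, |t k| ≤ t (Fin.last ne) := fun k =>
    (abs_of_pos (ht0.trans_le (ht_first k))).trans_le (ht_last k)
  have ht_last_nonneg : 0 ≤ t (Fin.last ne) := ht0.le.trans (ht_first _)
  have ht_centered : ∀ k, |t k - (t 0 + t (Fin.last ne)) / 2| ≤ (t (Fin.last ne) - t 0) / 2 :=
    fun k => abs_le.mpr ⟨by linarith [ht_first k], by linarith [ht_last k]⟩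
  rw [← cstar_norm_def, eq_Rres'_iterate_lie_of_hasDerivAt t P Rn hRn0 hRnD]
  calc _ ≤ _ := norm_Rres'_le t ht_centered _ ξ
    _ ≤ (4 * Real.pi * t (Fin.last ne)) ^ n * 1 *
          Real.exp (4 * Real.pi * ((t (Fin.last ne) - t 0) / 2) * |ξ.im|) := by
        grw [norm_iterate_lie_diagonal_le t ht_last_nonneg ht_abs P n,
          hP.isStarProjection.norm_le]
    _ = τ ^ n * Real.exp (τS * |ξ.im| / 2) := by
        rw [hτ, hτS]
        ring_nf
end

section
/- Suppose the matrix J = [T Φ Φ] ∈ ℂ^{n_e × 2n_s} has trivial nullspace, where T = diag(t_1,...,t_{n_e}). Then for every ξ_0 ∈ ℂ and every c_0 ∈ ℂ^{n_s}, the differential matrix Ds(ξ_0, c_0) = [2πi T W(ξ_0) Φ c_0 | W(ξ_0) Φ] ∈ ℂ^{n_e × (1+n_s)} is full-rank (rank 1 + n_s) for all c_0 ≠ 0, and conversely if J has non-trivial nullspace then there exist (ξ_0, c_0) for which Ds(ξ_0, c_0) is rank-deficient. -/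
open Complex Matrix

/-- The differential matrix `Ds(ξ₀, c₀) = [2πi T W(ξ₀) Φ c₀ | W(ξ₀) Φ]`. -/
noncomputable def Ds {ne ns : ℕ} (t : Fin ne → ℝ) (Φ : Matrix (Fin ne) (Fin ns) ℂ)
    (ξ0 : ℂ) (c0 : Fin ns → ℂ) : Matrix (Fin ne) (Unit ⊕ Fin ns) ℂ :=
  Matrix.of fun i j =>
    Sum.elim
      (fun _ : Unit =>
        ((2 * Real.pi * Complex.I) •
          ((Matrix.diagonal fun k => ((t k : ℝ) : ℂ)) * Wmat t ξ0 * Φ).mulVec c0) i)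
      (fun l => (Wmat t ξ0 * Φ) i l) j

/-!
Because `W(ξ)` is diagonal it commutes with `T`, so `Ds(ξ, c) = W(ξ) · J · A(2πi c)`, where
`A(v)` is the matrix of `(a, w) ↦ (a v, w)`. As `W(ξ)` is invertible, `Ds(ξ, c)` has the rank
of `J · A(2πi c)`. For `c ≠ 0` the map `A(2πi c)` is injective, so an injective `J` gives full
column rank `1 + n_s`. Conversely, a null vector `(z₁, z₂)` of `J` yields the null vector
`(1, z₂)` of `J · A(z₁)`, which is `J · A(2πi c)` for `c = z₁ / 2πi`.
-/

namespace Matrix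

variable {K m n : Type*} [Field K] [Fintype n]

theorem rank_eq_card_iff_injective_mulVec (A : Matrix m n K) :
    A.rank = Fintype.card n ↔ Function.Injective A.mulVec := by
  have h := A.mulVecLin.finrank_range_add_finrank_ker
  rw [Module.finrank_fintype_fun_eq_card] at h
  change Module.finrank K A.mulVecLin.range = _ ↔ Function.Injective A.mulVecLin
  rw [← LinearMap.ker_eq_bot, ← Submodule.finrank_eq_zero]
  omega

theorem rank_lt_card_of_mulVec_eq_zero {A : Matrix m n K} {v : n → K} (hv : v ≠ 0)
    (hAv : A *ᵥ v = 0) : A.rank < Fintype.card n := by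
  refine (A.rank_le_card_width).lt_of_ne fun h => hv ?_
  exact (A.rank_eq_card_iff_injective_mulVec.mp h) (by rw [hAv, mulVec_zero])

variable {R : Type*} [CommSemiring R] [DecidableEq n]

def augment (v : n → R) : Matrix (n ⊕ n) (Unit ⊕ n) R :=
  fromBlocks (replicateCol Unit v) 0 0 1

theorem augment_mulVec (v : n → R) (w : Unit ⊕ n → R) :
    augment v *ᵥ w = Sum.elim (w (.inl ()) • v) (w ∘ .inr) := by
  rw [augment, ← Sum.elim_comp_inl_inr w, fromBlocks_mulVec]
  ext (i | i) <;> simp [mulVec, dotProduct, mul_comm]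

theorem augment_mulVec_injective {v : n → K} (hv : v ≠ 0) :
    Function.Injective (augment v).mulVec := by
  refine (injective_iff_map_eq_zero (augment v).mulVecLin).mpr fun w hw => ?_
  rw [mulVecLin_apply, augment_mulVec] at hw
  obtain ⟨i, hi : v i ≠ 0⟩ := Function.ne_iff.mp hv
  ext (⟨⟩ | j)
  · simpa [hi] using congrFun hw (.inl i)
  · simpa using congrFun hw (.inr j)

end Matrix

theorem isUnit_det_Wmat {ne : ℕ} (t : Fin ne → ℝ) (ξ : ℂ) : IsUnit (Wmat t ξ).det := by
  simp [Wmat, det_diagonal, Finset.prod_ne_zero_iff, Complex.exp_ne_zero]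

theorem Ds_eq_Wmat_mul {ne ns : ℕ} (t : Fin ne → ℝ) (Φ : Matrix (Fin ne) (Fin ns) ℂ) (ξ : ℂ)
    (c : Fin ns → ℂ) :
    Ds t Φ ξ c = Wmat t ξ *
      (fromCols (diagonal (fun k => ((t k : ℝ) : ℂ)) * Φ) Φ * augment ((2 * Real.pi * I) • c)) := by
  rw [augment, fromCols_mul_fromBlocks, Matrix.mul_zero, Matrix.mul_zero, Matrix.mul_one,
    add_zero, zero_add, mul_fromCols, ← replicateCol_mulVec, ← replicateCol_mulVec]
  ext i (j | l)
  · simp only [Ds, of_apply, Sum.elim_inl, fromCols_apply_inl, replicateCol_apply, mulVec_smul,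
      ← mulVec_mulVec, Pi.smul_apply, Wmat, mulVec_diagonal]
    ring
  · simp [Ds]

theorem stmt_15_general (ne ns : ℕ) (t : Fin ne → ℝ)
    (Φ : Matrix (Fin ne) (Fin ns) ℂ)
    (J : Matrix (Fin ne) (Fin ns ⊕ Fin ns) ℂ)
    (hJ : J = Matrix.fromCols ((Matrix.diagonal fun k => ((t k : ℝ) : ℂ)) * Φ) Φ) :
    ((∀ z : Fin ns ⊕ Fin ns → ℂ, J.mulVec z = 0 → z = 0) →
      ∀ (ξ0 : ℂ) (c0 : Fin ns → ℂ), c0 ≠ 0 → (Ds t Φ ξ0 c0).rank = 1 + ns) ∧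
    ((∃ z : Fin ns ⊕ Fin ns → ℂ, z ≠ 0 ∧ J.mulVec z = 0) →
      ∃ (ξ0 : ℂ) (c0 : Fin ns → ℂ), (Ds t Φ ξ0 c0).rank < 1 + ns) := by
  have hrank (ξ : ℂ) (c : Fin ns → ℂ) :
      (Ds t Φ ξ c).rank = (J * augment ((2 * Real.pi * I) • c)).rank := by
    rw [Ds_eq_Wmat_mul, hJ, rank_mul_eq_right_of_isUnit_det _ _ (isUnit_det_Wmat t ξ)]
  have hcard : Fintype.card (Unit ⊕ Fin ns) = 1 + ns := by simp
  refine ⟨fun hJker ξ c hc => ?_, fun ⟨z, _, hJz⟩ => ?_⟩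
  · have hJinj : Function.Injective J.mulVec :=
      (injective_iff_map_eq_zero J.mulVecLin).mpr hJker
    rw [hrank, ← hcard, rank_eq_card_iff_injective_mulVec]
    intro w w' h
    simp only [← mulVec_mulVec] at h
    exact augment_mulVec_injective (smul_ne_zero two_pi_I_ne_zero hc) (hJinj h)
  · refine ⟨0, (2 * Real.pi * I)⁻¹ • (z ∘ Sum.inl), ?_⟩
    rw [hrank, smul_inv_smul₀ two_pi_I_ne_zero, ← hcard]
    refine rank_lt_card_of_mulVec_eq_zero (v := Sum.elim 1 (z ∘ Sum.inr))
      (fun h => one_ne_zero (congrFun h (.inl ()))) ?_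
    rw [← mulVec_mulVec, augment_mulVec]
    simpa using hJz

theorem stmt_15 (ne ns : ℕ) (t : Fin ne → ℝ) (ht : ∀ k, 0 < t k)
    (Φ : Matrix (Fin ne) (Fin ns) ℂ)
    (J : Matrix (Fin ne) (Fin ns ⊕ Fin ns) ℂ)
    (hJ : J = Matrix.fromCols ((Matrix.diagonal fun k => ((t k : ℝ) : ℂ)) * Φ) Φ) :
    ((∀ z : Fin ns ⊕ Fin ns → ℂ, J.mulVec z = 0 → z = 0) →
      ∀ (ξ0 : ℂ) (c0 : Fin ns → ℂ), c0 ≠ 0 → (Ds t Φ ξ0 c0).rank = 1 + ns) ∧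
    ((∃ z : Fin ns ⊕ Fin ns → ℂ, z ≠ 0 ∧ J.mulVec z = 0) →
      ∃ (ξ0 : ℂ) (c0 : Fin ns → ℂ), (Ds t Φ ξ0 c0).rank < 1 + ns) :=
  stmt_15_general ne ns t Φ J hJ
end
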